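/- arXiv:2308.10970 — 10 statements merged into one kernel-verified Lean document; each statement's English description precedes it below -/
import Mathlib

section
/- Let V and V' be finite types, let H be a simple graph on V', and let p : V' → V be a map such that every edge of H joins two vertices with distinct images under p. Let f assign a real weight to each edge of H. Suppose that: (i) f(e) ≥ 0 for every edge e of H; (ii) for every v ∈ V, the sum of f over all edges of H having at least one endpoint in p⁻¹(v) is at most 1; and (iii) for every subset U ⊆ V of odd cardinality, the sum of f over all edges of H having both endpoints in p⁻¹(U) is at most ⌊|U|/2⌋. Then f satisfies the Edmonds matching-polytope constraints of H itself: for every vertex v' of H the sum of f over edges incident to v' is at most 1, and for every subset U' ⊆ V' of odd cardinality the sum of f over edges of H with both endpoints in U' is at most ⌊|U'|/2⌋. -/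
open Finset

/-- If `f` satisfies the pulled-back Edmonds matching-polytope constraints of the
auxiliary graph `H` through the collapsing map `p : V' → V` (nonnegativity; load at most 1 on the
preimage of each node `v ∈ V`; odd-set constraints for preimages of odd node sets `U ⊆ V`), then
`f` satisfies the Edmonds matching-polytope constraints of `H` itself. -/
theorem sectorization_matching_polytope_containment
    {V V' : Type*} [Fintype V] [Fintype V'] [DecidableEq V] [DecidableEq V']
    (H : SimpleGraph V') [DecidableRel H.Adj] (p : V' → V)
    (hp : ∀ a b : V', H.Adj a b → p a ≠ p b)
    (f : Sym2 V' → ℝ)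
    (h₀ : ∀ e ∈ H.edgeFinset, 0 ≤ f e)
    (h₁ : ∀ v : V, ∑ e ∈ H.edgeFinset.filter (fun e => ∃ x ∈ e, p x = v), f e ≤ 1)
    (h₂ : ∀ U : Finset V, Odd U.card →
      ∑ e ∈ H.edgeFinset.filter (fun e => ∀ x ∈ e, p x ∈ U), f e ≤ ((U.card / 2 : ℕ) : ℝ)) :
    (∀ v' : V', ∑ e ∈ H.incidenceFinset v', f e ≤ 1) ∧
    (∀ U' : Finset V', Odd U'.card →
      ∑ e ∈ H.edgeFinset.filter (fun e => ∀ x ∈ e, x ∈ U'), f e ≤ ((U'.card / 2 : ℕ) : ℝ)) := by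
  constructor
  · intro v'
    refine le_trans ?_ (h₁ (p v'))
    refine Finset.sum_le_sum_of_subset_of_nonneg ?_
      (fun e he _ => h₀ e (Finset.mem_filter.mp he).1)
    intro e he
    rw [SimpleGraph.mem_incidenceFinset] at he
    exact Finset.mem_filter.mpr ⟨SimpleGraph.mem_edgeFinset.mpr he.1, v', he.2, rfl⟩
  · intro U' hU'
    set W := U'.image p with hWdef
    have hcard : W.card ≤ U'.card := Finset.card_image_le
    by_cases hodd : Odd W.card
    · have hsub : H.edgeFinset.filter (fun e => ∀ x ∈ e, x ∈ U') ⊆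
          H.edgeFinset.filter (fun e => ∀ x ∈ e, p x ∈ W) := by
        intro e he
        rw [Finset.mem_filter] at he ⊢
        exact ⟨he.1, fun x hx => Finset.mem_image_of_mem p (he.2 x hx)⟩
      calc ∑ e ∈ H.edgeFinset.filter (fun e => ∀ x ∈ e, x ∈ U'), f e
          ≤ ∑ e ∈ H.edgeFinset.filter (fun e => ∀ x ∈ e, p x ∈ W), f e :=
            Finset.sum_le_sum_of_subset_of_nonneg hsub
              (fun e he _ => h₀ e (Finset.mem_filter.mp he).1)
        _ ≤ ((W.card / 2 : ℕ) : ℝ) := h₂ W hodd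
        _ ≤ ((U'.card / 2 : ℕ) : ℝ) := Nat.cast_le.mpr (Nat.div_le_div_right hcard)
    · have heven : Even W.card := Nat.not_odd_iff_even.mp hodd
      have hne : W.Nonempty := by
        rw [hWdef, Finset.image_nonempty]
        exact Finset.card_pos.mp hU'.pos
      obtain ⟨v, hv⟩ := hne
      set A := H.edgeFinset.filter (fun e => ∀ x ∈ e, p x ∈ W.erase v) with hAdef
      set B := H.edgeFinset.filter (fun e => ∃ x ∈ e, p x = v) with hBdef
      have hcover : H.edgeFinset.filter (fun e => ∀ x ∈ e, x ∈ U') ⊆ A ∪ B := by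
        intro e he
        rw [Finset.mem_filter] at he
        by_cases hB : ∃ x ∈ e, p x = v
        · exact Finset.mem_union_right _ (Finset.mem_filter.mpr ⟨he.1, hB⟩)
        · push_neg at hB
          refine Finset.mem_union_left _ (Finset.mem_filter.mpr ⟨he.1, fun x hx => ?_⟩)
          exact Finset.mem_erase.mpr ⟨hB x hx, Finset.mem_image_of_mem p (he.2 x hx)⟩
      have h0AB : ∀ e ∈ A ∪ B, 0 ≤ f e := by
        intro e he
        rcases Finset.mem_union.mp he with h | h
        · exact h₀ e (Finset.mem_filter.mp h).1
        · exact h₀ e (Finset.mem_filter.mp h).1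
      have hApar : Odd (W.erase v).card := by
        rw [Finset.card_erase_of_mem hv]
        rcases heven with ⟨k, hk⟩
        have hpos : 0 < W.card := Finset.card_pos.mpr ⟨v, hv⟩
        refine ⟨k - 1, ?_⟩
        omega
      have hAbd := h₂ (W.erase v) hApar
      have hBbd := h₁ v
      have hstep : ∑ e ∈ A ∪ B, f e ≤ ∑ e ∈ A, f e + ∑ e ∈ B, f e := by
        have hui := Finset.sum_union_inter (s₁ := A) (s₂ := B) (f := f)
        have hnnI : 0 ≤ ∑ e ∈ A ∩ B, f e :=
          Finset.sum_nonneg (fun e he =>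
            h₀ e (Finset.mem_filter.mp (Finset.mem_of_mem_inter_left he)).1)
        linarith
      calc ∑ e ∈ H.edgeFinset.filter (fun e => ∀ x ∈ e, x ∈ U'), f e
          ≤ ∑ e ∈ A ∪ B, f e :=
            Finset.sum_le_sum_of_subset_of_nonneg hcover (fun e he _ => h0AB e he)
        _ ≤ ∑ e ∈ A, f e + ∑ e ∈ B, f e := hstep
        _ ≤ (((W.erase v).card / 2 : ℕ) : ℝ) + 1 := add_le_add hAbd hBbd
        _ ≤ ((U'.card / 2 : ℕ) : ℝ) := by
            rw [Finset.card_erase_of_mem hv]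
            have hnum : (W.card - 1) / 2 + 1 ≤ U'.card / 2 := by
              rcases heven with ⟨k, hk⟩
              have hpos : 0 < W.card := Finset.card_pos.mpr ⟨v, hv⟩
              omega
            calc (((W.card - 1) / 2 : ℕ) : ℝ) + 1
                = (((W.card - 1) / 2 + 1 : ℕ) : ℝ) := by push_cast; ring
              _ ≤ _ := Nat.cast_le.mpr hnum
end

section
/- Let G = (V, E) be a finite simple graph and let f : E → ℝ satisfy the fractional matching constraints of G, i.e., f(e) ≥ 0 for all edges e and the sum of f over the edges incident to v is at most 1 for every vertex v. Then for every subset U ⊆ V of odd cardinality, the sum of f over the edges of G with both endpoints in U is at most (3/2)·⌊|U|/2⌋. Equivalently, the scaled weighting (2/3)·f satisfies all odd-set constraints ∑_{e ∈ E(U)} (2/3)f(e) ≤ ⌊|U|/2⌋. -/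
open Finset

/-- If `f` satisfies the fractional matching constraints of a finite simple graph
`G`, then every odd-set sum is at most `(3/2) · ⌊|U|/2⌋`; equivalently `(2/3) · f` satisfies all
of Edmonds' odd-set constraints. -/
theorem fractional_matching_odd_set_bound
    {V : Type*} [Fintype V] [DecidableEq V]
    (G : SimpleGraph V) [DecidableRel G.Adj] (f : Sym2 V → ℝ)
    (h₀ : ∀ e ∈ G.edgeFinset, 0 ≤ f e)
    (h₁ : ∀ v : V, ∑ e ∈ G.incidenceFinset v, f e ≤ 1) :
    ∀ U : Finset V, Odd U.card →
      (∑ e ∈ G.edgeFinset.filter (fun e => ∀ x ∈ e, x ∈ U), f e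
          ≤ (3 / 2 : ℝ) * ((U.card / 2 : ℕ) : ℝ)) ∧
      (∑ e ∈ G.edgeFinset.filter (fun e => ∀ x ∈ e, x ∈ U), (2 / 3 : ℝ) * f e
          ≤ ((U.card / 2 : ℕ) : ℝ)) := by
  intro U hodd
  set T := G.edgeFinset.filter (fun e => ∀ x ∈ e, x ∈ U) with hT
  obtain ⟨k, hk⟩ := hodd
  have hfloor : U.card / 2 = k := by omega
  -- double counting
  have key : 2 * ∑ e ∈ T, f e ≤ (U.card : ℝ) := by
    have step1 : 2 * ∑ e ∈ T, f e = ∑ e ∈ T, ∑ v ∈ U, (if v ∈ e then f e else 0) := by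
      rw [Finset.mul_sum]
      refine Finset.sum_congr rfl ?_
      intro e he
      rw [← Finset.sum_filter, Finset.sum_const, nsmul_eq_mul]
      have hmem := Finset.mem_filter.mp he
      have hcard : (U.filter (fun v => v ∈ e)).card = 2 := by
        induction e using Sym2.ind with
        | _ a b =>
          have hadj : G.Adj a b := SimpleGraph.mem_edgeFinset.mp hmem.1
          have hne : a ≠ b := hadj.ne
          have ha : a ∈ U := hmem.2 a (by simp)
          have hb : b ∈ U := hmem.2 b (by simp)
          have : U.filter (fun v => v ∈ s(a, b)) = {a, b} := by
            ext x
            simp only [Finset.mem_filter, Sym2.mem_iff, Finset.mem_insert,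
              Finset.mem_singleton]
            constructor
            · rintro ⟨_, h | h⟩ <;> simp [h]
            · rintro (h | h) <;> subst h <;> simp [ha, hb]
          rw [this, Finset.card_insert_of_notMem (by simpa using hne),
            Finset.card_singleton]
      rw [hcard]
      push_cast
      ring
    rw [step1, Finset.sum_comm]
    calc ∑ v ∈ U, ∑ e ∈ T, (if v ∈ e then f e else 0)
        ≤ ∑ v ∈ U, (1 : ℝ) := by
          refine Finset.sum_le_sum ?_
          intro v _
          rw [← Finset.sum_filter]
          refine le_trans ?_ (h₁ v)
          refine Finset.sum_le_sum_of_subset_of_nonneg ?_ ?_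
          · intro e he
            have := Finset.mem_filter.mp he
            have he' := Finset.mem_filter.mp this.1
            rw [SimpleGraph.mem_incidenceFinset]
            exact ⟨SimpleGraph.mem_edgeFinset.mp he'.1, this.2⟩
          · intro e he _
            rw [SimpleGraph.mem_incidenceFinset] at he
            exact h₀ e (SimpleGraph.mem_edgeFinset.mpr he.1)
      _ = (U.card : ℝ) := by simp
  have hnonneg : 0 ≤ ∑ e ∈ T, f e :=
    Finset.sum_nonneg fun e he => h₀ e (Finset.mem_filter.mp he).1
  have main : ∑ e ∈ T, f e ≤ (3 / 2 : ℝ) * ((U.card / 2 : ℕ) : ℝ) := by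
    rcases Nat.eq_zero_or_pos k with hk0 | hk1
    · -- |U| = 1 : no edges inside U
      subst hk0
      have hTempty : T = ∅ := by
        rw [Finset.eq_empty_iff_forall_notMem]
        intro e he
        have hmem := Finset.mem_filter.mp he
        induction e using Sym2.ind with
        | _ a b =>
          have hadj : G.Adj a b := SimpleGraph.mem_edgeFinset.mp hmem.1
          have ha : a ∈ U := hmem.2 a (by simp)
          have hb : b ∈ U := hmem.2 b (by simp)
          have : U.card = 1 := by omega
          obtain ⟨u, hu⟩ := Finset.card_eq_one.mp this
          rw [hu, Finset.mem_singleton] at ha hb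
          exact hadj.ne (ha.trans hb.symm)
      simp [hTempty]
    · have h1 : ∑ e ∈ T, f e ≤ (U.card : ℝ) / 2 := by linarith
      have h2 : ((U.card : ℝ)) = 2 * k + 1 := by exact_mod_cast congrArg (Nat.cast : ℕ → ℝ) hk
      rw [hfloor]
      have hk' : (1 : ℝ) ≤ k := by exact_mod_cast hk1
      rw [h2] at h1
      nlinarith
  refine ⟨main, ?_⟩
  rw [← Finset.mul_sum]
  calc (2 / 3 : ℝ) * ∑ e ∈ T, f e
      ≤ (2 / 3 : ℝ) * ((3 / 2 : ℝ) * ((U.card / 2 : ℕ) : ℝ)) := by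
        exact mul_le_mul_of_nonneg_left main (by norm_num)
    _ = ((U.card / 2 : ℕ) : ℝ) := by ring
end

section
/- Let G = (V, E) be a finite simple graph and let f : E → ℝ be nonnegative edge weights that are not identically zero. Define λ(f) as the supremum of the set of t ≥ 0 such that t·f satisfies the Edmonds matching-polytope constraints of G, and μ(f) as the supremum of the set of t ≥ 0 such that t·f satisfies the fractional matching constraints of G. Then (2/3)·μ(f) ≤ λ(f) ≤ μ(f). -/
open Finset

/-- `f` satisfies the Edmonds matching-polytope constraints of `G`. -/
def EdmondsConstraints {V : Type*} [Fintype V] [DecidableEq V]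
    (G : SimpleGraph V) [DecidableRel G.Adj] (f : Sym2 V → ℝ) : Prop :=
  (∀ e ∈ G.edgeFinset, 0 ≤ f e) ∧
  (∀ v : V, ∑ e ∈ G.incidenceFinset v, f e ≤ 1) ∧
  (∀ U : Finset V, Odd U.card →
    ∑ e ∈ G.edgeFinset.filter (fun e => ∀ x ∈ e, x ∈ U), f e ≤ ((U.card / 2 : ℕ) : ℝ))

/-- `f` satisfies the fractional matching constraints of `G`. -/
def FractionalMatchingConstraints {V : Type*} [Fintype V] [DecidableEq V]
    (G : SimpleGraph V) [DecidableRel G.Adj] (f : Sym2 V → ℝ) : Prop :=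
  (∀ e ∈ G.edgeFinset, 0 ≤ f e) ∧
  (∀ v : V, ∑ e ∈ G.incidenceFinset v, f e ≤ 1)

private lemma filter_card_two {V : Type*} [Fintype V] [DecidableEq V]
    (G : SimpleGraph V) [DecidableRel G.Adj] (U : Finset V) (e : Sym2 V)
    (he : e ∈ G.edgeFinset.filter (fun e => ∀ x ∈ e, x ∈ U)) :
    (U.filter (fun v => v ∈ e)).card = 2 := by
  rw [Finset.mem_filter, SimpleGraph.mem_edgeFinset] at he
  obtain ⟨he, hU⟩ := he
  induction e with
  | h a b =>
    have hadj : G.Adj a b := he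
    have hab : a ≠ b := hadj.ne
    have haU : a ∈ U := hU a (by simp)
    have hbU : b ∈ U := hU b (by simp)
    have : U.filter (fun v => v ∈ s(a, b)) = {a, b} := by
      ext v
      simp only [Finset.mem_filter, Sym2.mem_iff, Finset.mem_insert, Finset.mem_singleton]
      constructor
      · rintro ⟨-, h | h⟩ <;> simp [h]
      · rintro (h | h) <;> subst h <;> simp [haU, hbU]
    rw [this, Finset.card_insert_of_notMem (by simpa using hab), Finset.card_singleton]

private lemma handshake {V : Type*} [Fintype V] [DecidableEq V]
    (G : SimpleGraph V) [DecidableRel G.Adj] (g : Sym2 V → ℝ)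
    (hg : ∀ e ∈ G.edgeFinset, 0 ≤ g e) (U : Finset V) :
    2 * ∑ e ∈ G.edgeFinset.filter (fun e => ∀ x ∈ e, x ∈ U), g e
      ≤ ∑ v ∈ U, ∑ e ∈ G.incidenceFinset v, g e := by
  set S := G.edgeFinset.filter (fun e => ∀ x ∈ e, x ∈ U) with hS
  have h1 : ∀ v ∈ U, ∑ e ∈ S.filter (fun e => v ∈ e), g e
      ≤ ∑ e ∈ G.incidenceFinset v, g e := by
    intro v _
    apply Finset.sum_le_sum_of_subset_of_nonneg
    · intro e he
      rw [Finset.mem_filter, hS, Finset.mem_filter] at he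
      rw [SimpleGraph.incidenceFinset_eq_filter, Finset.mem_filter]
      exact ⟨he.1.1, he.2⟩
    · intro e he _
      rw [SimpleGraph.incidenceFinset_eq_filter, Finset.mem_filter] at he
      exact hg e he.1
  calc 2 * ∑ e ∈ S, g e = ∑ e ∈ S, (U.filter (fun v => v ∈ e)).card * g e := by
        rw [Finset.mul_sum]
        apply Finset.sum_congr rfl
        intro e he
        rw [filter_card_two G U e he]
        norm_num
    _ = ∑ e ∈ S, ∑ v ∈ U.filter (fun v => v ∈ e), g e := by
        apply Finset.sum_congr rfl
        intro e _
        rw [Finset.sum_const, nsmul_eq_mul]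
    _ = ∑ e ∈ S, ∑ v ∈ U, if v ∈ e then g e else 0 := by
        apply Finset.sum_congr rfl
        intro e _
        rw [Finset.sum_filter]
    _ = ∑ v ∈ U, ∑ e ∈ S, if v ∈ e then g e else 0 := Finset.sum_comm
    _ = ∑ v ∈ U, ∑ e ∈ S.filter (fun e => v ∈ e), g e := by
        apply Finset.sum_congr rfl
        intro v _
        exact (Finset.sum_filter _ _).symm
    _ ≤ ∑ v ∈ U, ∑ e ∈ G.incidenceFinset v, g e := Finset.sum_le_sum h1

/-- For nonnegative, not identically zero edge weights `f`, the flow extension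
ratio `λ(f)` (w.r.t. the Edmonds matching polytope) and the approximate flow extension ratio
`μ(f)` (w.r.t. the fractional matching polytope) satisfy `(2/3)·μ(f) ≤ λ(f) ≤ μ(f)`. -/
theorem flow_extension_ratio_approximation
    {V : Type*} [Fintype V] [DecidableEq V]
    (G : SimpleGraph V) [DecidableRel G.Adj] (f : Sym2 V → ℝ)
    (h₀ : ∀ e ∈ G.edgeFinset, 0 ≤ f e)
    (hne : ∃ e ∈ G.edgeFinset, f e ≠ 0) :
    (2 / 3 : ℝ) * sSup {t : ℝ | 0 ≤ t ∧ FractionalMatchingConstraints G (fun e => t * f e)}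
        ≤ sSup {t : ℝ | 0 ≤ t ∧ EdmondsConstraints G (fun e => t * f e)} ∧
    sSup {t : ℝ | 0 ≤ t ∧ EdmondsConstraints G (fun e => t * f e)}
        ≤ sSup {t : ℝ | 0 ≤ t ∧ FractionalMatchingConstraints G (fun e => t * f e)} := by
  obtain ⟨e₀, he₀, hfe₀⟩ := hne
  have hfe₀pos : 0 < f e₀ := lt_of_le_of_ne (h₀ e₀ he₀) (Ne.symm hfe₀)
  set F := {t : ℝ | 0 ≤ t ∧ FractionalMatchingConstraints G (fun e => t * f e)} with hF
  set E := {t : ℝ | 0 ≤ t ∧ EdmondsConstraints G (fun e => t * f e)} with hE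
  -- 0 is in both sets
  have h0F : (0 : ℝ) ∈ F := by
    refine ⟨le_refl 0, fun e _ => by simp, fun v => ?_⟩
    simp
  have h0E : (0 : ℝ) ∈ E := by
    refine ⟨le_refl 0, fun e _ => by simp, fun v => by simp, fun U _ => ?_⟩
    simp
  -- E ⊆ F
  have hEF : E ⊆ F := fun t ⟨ht, h1, h2, _⟩ => ⟨ht, h1, h2⟩
  -- F is bounded above
  obtain ⟨a, ha⟩ : ∃ a, a ∈ e₀ := by
    induction e₀ with
    | h x y => exact ⟨x, by simp⟩
  have he₀inc : e₀ ∈ G.incidenceFinset a := by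
    rw [SimpleGraph.incidenceFinset_eq_filter, Finset.mem_filter]
    exact ⟨he₀, ha⟩
  have hbddF : BddAbove F := by
    refine ⟨1 / f e₀, fun t ⟨ht, hnn, hv⟩ => ?_⟩
    have key : t * f e₀ ≤ ∑ e ∈ G.incidenceFinset a, t * f e := by
      apply Finset.single_le_sum (f := fun e => t * f e) _ he₀inc
      intro e he
      rw [SimpleGraph.incidenceFinset_eq_filter, Finset.mem_filter] at he
      exact hnn e he.1
    have := le_trans key (hv a)
    rw [le_div_iff₀ hfe₀pos]
    exact this
  have hbddE : BddAbove E := hbddF.mono hEF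
  -- the 2/3 scaling lemma
  have hscale : ∀ t ∈ F, (2 / 3 * t) ∈ E := by
    rintro t ⟨ht, hnn, hv⟩
    refine ⟨by linarith, fun e he => ?_, fun v => ?_, fun U hodd => ?_⟩
    · have h : 0 ≤ t * f e := hnn e he
      have h2 : (0:ℝ) ≤ 2 / 3 * (t * f e) := by positivity
      linarith
    · have h1 : ∑ e ∈ G.incidenceFinset v, 2 / 3 * t * f e
          = 2 / 3 * ∑ e ∈ G.incidenceFinset v, t * f e := by
        rw [Finset.mul_sum]; exact Finset.sum_congr rfl fun x _ => by ring
      rw [h1]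
      have := hv v
      linarith
    · obtain ⟨k, hk⟩ := hodd
      have hsum : ∑ e ∈ G.edgeFinset.filter (fun e => ∀ x ∈ e, x ∈ U), 2 / 3 * t * f e
          = 2 / 3 * ∑ e ∈ G.edgeFinset.filter (fun e => ∀ x ∈ e, x ∈ U), t * f e := by
        rw [Finset.mul_sum]; exact Finset.sum_congr rfl fun x _ => by ring
      rw [hsum]
      have hcard : (U.card / 2 : ℕ) = k := by omega
      rw [hcard]
      rcases Nat.eq_zero_or_pos k with hk0 | hkpos
      · subst hk0
        have hUcard : U.card = 1 := by omega
        have hempty : G.edgeFinset.filter (fun e => ∀ x ∈ e, x ∈ U) = ∅ := by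
          rw [Finset.filter_eq_empty_iff]
          intro e he
          induction e with
          | h x y =>
            intro hx
            have hadj : G.Adj x y := by rwa [SimpleGraph.mem_edgeFinset] at he
            have hxU : x ∈ U := hx x (by simp)
            have hyU : y ∈ U := hx y (by simp)
            exact hadj.ne (Finset.card_le_one.mp (le_of_eq hUcard) x hxU y hyU)
        rw [hempty]
        simp
      · have hh := handshake G (fun e => t * f e) hnn U
        have hvsum : ∑ v ∈ U, ∑ e ∈ G.incidenceFinset v, t * f e ≤ (U.card : ℝ) := by
          calc ∑ v ∈ U, ∑ e ∈ G.incidenceFinset v, t * f e ≤ ∑ _v ∈ U, (1 : ℝ) :=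
                Finset.sum_le_sum (fun v _ => hv v)
            _ = (U.card : ℝ) := by simp
        have hk1 : (1 : ℝ) ≤ k := by exact_mod_cast hkpos
        have hUc : (U.card : ℝ) = 2 * k + 1 := by rw [hk]; push_cast; ring
        rw [hUc] at hvsum
        nlinarith
  constructor
  · -- 2/3 * sSup F ≤ sSup E
    rw [mul_comm]
    rw [← le_div_iff₀ (by norm_num : (0:ℝ) < 2/3)]
    apply csSup_le ⟨0, h0F⟩
    intro t htF
    have h1 : 2 / 3 * t ≤ sSup E := le_csSup hbddE (hscale t htF)
    rw [le_div_iff₀ (by norm_num : (0:ℝ) < 2/3)]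
    linarith
  · exact csSup_le_csSup hbddF ⟨0, h0E⟩ hEF
end

section
/- Let G = (V, E) be a finite simple graph, let f : E → ℝ be nonnegative edge weights, and let D, c ≥ 0 be real numbers such that the sum of f over the edges incident to v is at most D for every vertex v, and f(e) ≤ c for every edge e. Then for every subset U ⊆ V of odd cardinality, the sum of f over the edges of G with both endpoints in U is at most ⌊|U|/2⌋·(D + c). -/
/-!
Let `|U| = 2k + 1` and let `ℓ(v)` be the weight of the edges of `E(U)` at `v`. Each edge of
`E(U)` is counted twice in `∑_{v ∈ U} ℓ(v)`, so `2 f(E(U)) = ∑_{v ∈ U} ℓ(v)`. Fix `u ∈ U`: the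
`2k` vertices other than `u` have `ℓ(v) ≤ D`, while `u` has at most `2k` neighbours in `U`, so
`ℓ(u) ≤ 2k c`. Hence `2 f(E(U)) ≤ 2k (D + c)`.
-/

open Finset

namespace Sym2

variable {V M : Type*} [DecidableEq V] [AddCommMonoid M] {T : Finset (Sym2 V)} {U : Finset V}

theorem sum_sum_filter_mem_eq_two_nsmul (hdiag : ∀ e ∈ T, ¬e.IsDiag)
    (hsub : ∀ e ∈ T, ∀ x ∈ e, x ∈ U) (f : Sym2 V → M) :
    ∑ v ∈ U, ∑ e ∈ T with v ∈ e, f e = 2 • ∑ e ∈ T, f e := by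
  rw [Finset.sum_comm' (t' := T) (s' := fun e => U.filter (· ∈ e)) (by grind), smul_sum]
  refine sum_congr rfl fun e he => ?_
  have hends : U.filter (· ∈ e) = e.toFinset := by
    ext x
    simpa using hsub e he x
  rw [sum_const, hends, card_toFinset_of_not_isDiag e (hdiag e he)]

theorem card_filter_mem_le_card_erase (hdiag : ∀ e ∈ T, ¬e.IsDiag)
    (hsub : ∀ e ∈ T, ∀ x ∈ e, x ∈ U) (v : V) :
    #(T.filter (v ∈ ·)) ≤ #(U.erase v) := by
  refine (card_le_card fun e he => ?_).trans (card_image_le (f := fun w => s(v, w)))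
  obtain ⟨he, hv⟩ := mem_filter.mp he
  obtain ⟨w, rfl⟩ := mem_iff_exists.mp hv
  have hvw : v ≠ w := by simpa using hdiag _ he
  exact mem_image_of_mem _ (mem_erase.mpr ⟨hvw.symm, hsub _ he w (mem_mk_right v w)⟩)

end Sym2

theorem SimpleGraph.sum_filter_mem_le_sum_incidenceFinset {V M : Type*} [Fintype V]
    [DecidableEq V] [AddCommMonoid M] [PartialOrder M] [IsOrderedAddMonoid M]
    (G : SimpleGraph V) [DecidableRel G.Adj] {f : Sym2 V → M} (h₀ : ∀ e ∈ G.edgeFinset, 0 ≤ f e)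
    {T : Finset (Sym2 V)} (hT : T ⊆ G.edgeFinset) (v : V) :
    ∑ e ∈ T with v ∈ e, f e ≤ ∑ e ∈ G.incidenceFinset v, f e := by
  refine sum_le_sum_of_subset_of_nonneg (fun e he => ?_) fun e he _ => ?_
  · obtain ⟨heT, hv⟩ := mem_filter.mp he
    exact (G.mem_incidenceFinset v e).mpr ⟨G.mem_edgeFinset.mp (hT heT), hv⟩
  · exact h₀ e (G.incidenceFinset_subset v he)

theorem fractional_vizing_odd_set_bound_general
    {V : Type*} [Fintype V] [DecidableEq V]
    (G : SimpleGraph V) [DecidableRel G.Adj] (f : Sym2 V → ℝ)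
    (D c : ℝ) (hc : 0 ≤ c)
    (h₀ : ∀ e ∈ G.edgeFinset, 0 ≤ f e)
    (hload : ∀ v : V, ∑ e ∈ G.incidenceFinset v, f e ≤ D)
    (hcap : ∀ e ∈ G.edgeFinset, f e ≤ c) :
    ∀ U : Finset V, Odd U.card →
      ∑ e ∈ G.edgeFinset.filter (fun e => ∀ x ∈ e, x ∈ U), f e
        ≤ ((U.card / 2 : ℕ) : ℝ) * (D + c) := by
  intro U hU
  set T := G.edgeFinset.filter (fun e => ∀ x ∈ e, x ∈ U)
  set k := #U / 2
  have hT : T ⊆ G.edgeFinset := filter_subset _ _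
  have hdiag : ∀ e ∈ T, ¬e.IsDiag := fun e he =>
    G.not_isDiag_of_mem_edgeSet (SimpleGraph.mem_edgeFinset.mp (hT he))
  have hsub : ∀ e ∈ T, ∀ x ∈ e, x ∈ U := fun e he => (mem_filter.mp he).2
  have hk : #U = 2 * k + 1 := (Nat.two_mul_div_two_add_one_of_odd hU).symm
  obtain ⟨u, hu⟩ := card_pos.mp hU.pos
  have hloadD (v : V) : ∑ e ∈ T with v ∈ e, f e ≤ D :=
    (G.sum_filter_mem_le_sum_incidenceFinset h₀ hT v).trans (hload v)
  have hloadc : ∑ e ∈ T with u ∈ e, f e ≤ 2 * k * c := by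
    have hdeg : #(T.filter (u ∈ ·)) ≤ 2 * k := by
      simpa [card_erase_of_mem hu, hk] using Sym2.card_filter_mem_le_card_erase hdiag hsub u
    calc ∑ e ∈ T with u ∈ e, f e ≤ #(T.filter (u ∈ ·)) • c :=
          sum_le_card_nsmul _ _ _ fun e he => hcap e (hT (mem_filter.mp he).1)
      _ ≤ 2 * k * c := by
          rw [nsmul_eq_mul]
          exact mul_le_mul_of_nonneg_right (by exact_mod_cast hdeg) hc
  have hrest : ∑ v ∈ U.erase u, ∑ e ∈ T with v ∈ e, f e ≤ 2 * k * D := by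
    simpa [card_erase_of_mem hu, hk] using sum_le_card_nsmul (U.erase u) _ D fun v _ => hloadD v
  have hdouble : (2 : ℝ) * ∑ e ∈ T, f e
      = ∑ e ∈ T with u ∈ e, f e + ∑ v ∈ U.erase u, ∑ e ∈ T with v ∈ e, f e := by
    rw [add_sum_erase U (fun v => ∑ e ∈ T with v ∈ e, f e) hu,
      Sym2.sum_sum_filter_mem_eq_two_nsmul hdiag hsub f, two_nsmul, two_mul]
  linarith

/-- Fractional Vizing-type inequality. If nonnegative edge weights `f` have
vertex load at most `D` at every vertex and `f e ≤ c` on every edge (with `D, c ≥ 0`), then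
for every odd vertex subset `U`, the sum of `f` over the edges with both endpoints in `U` is
at most `⌊|U|/2⌋ · (D + c)`. -/
theorem fractional_vizing_odd_set_bound
    {V : Type*} [Fintype V] [DecidableEq V]
    (G : SimpleGraph V) [DecidableRel G.Adj] (f : Sym2 V → ℝ)
    (D c : ℝ) (hD : 0 ≤ D) (hc : 0 ≤ c)
    (h₀ : ∀ e ∈ G.edgeFinset, 0 ≤ f e)
    (hload : ∀ v : V, ∑ e ∈ G.incidenceFinset v, f e ≤ D)
    (hcap : ∀ e ∈ G.edgeFinset, f e ≤ c) :
    ∀ U : Finset V, Odd U.card →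
      ∑ e ∈ G.edgeFinset.filter (fun e => ∀ x ∈ e, x ∈ U), f e
        ≤ ((U.card / 2 : ℕ) : ℝ) * (D + c) :=
  fractional_vizing_odd_set_bound_general G f D c hc h₀ hload hcap
end

section
/- Let G = (V, E) be a finite simple graph and let f : E → ℝ be nonnegative edge weights that are not identically zero. Define λ(f) as the supremum of the set of t ≥ 0 such that t·f satisfies the Edmonds matching-polytope constraints of G, and μ(f) as the supremum of the set of t ≥ 0 such that t·f satisfies the fractional matching constraints of G. Then 1/μ(f) ≥ 1/λ(f) − max_{e ∈ E} f(e). -/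
open Finset

/-!
If `μ·f` is a fractional matching whose edge values are at most `a = μ·max f`, then on an odd set
`U` with `|U| = 2k + 1` its total is at most `k + 1/2` by double counting and at most
`k(2k + 1)·a` by counting edges; either bound gives at most `k(1 + a)`. Hence `μ/(1 + a)·f` lies
in the matching polytope, so `λ ≥ μ/(1 + μ·max f)`, which is the claim after taking reciprocals.
The supremum `μ` is attained because the admissible scalings form a closed bounded set.
-/

lemma le_mul_one_add_of_two_mul_le {X k a : ℝ} (hk : 0 ≤ k)
    (h_half : 2 * X ≤ 2 * k + 1) (h_count : X ≤ k * (2 * k + 1) * a) :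
    X ≤ k * (1 + a) := by
  rcases le_or_gt 1 (2 * k * a) with h | h
  · nlinarith
  · nlinarith [mul_nonneg hk (by linarith : (0 : ℝ) ≤ 1 - 2 * k * a)]

namespace SimpleGraph

variable {V : Type*} [Fintype V] [DecidableEq V] (G : SimpleGraph V) [DecidableRel G.Adj]

def edgesWithin (U : Finset V) : Finset (Sym2 V) :=
  G.edgeFinset.filter (fun e => ∀ x ∈ e, x ∈ U)

variable {G}

lemma filter_mem_eq_toFinset {U : Finset V} {e : Sym2 V} (he : e ∈ G.edgesWithin U) :
    U.filter (· ∈ e) = e.toFinset := by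
  ext x
  simp only [mem_filter, Sym2.mem_toFinset, and_iff_right_iff_imp]
  exact (mem_filter.1 he).2 x

lemma not_isDiag_of_mem_edgesWithin {U : Finset V} {e : Sym2 V} (he : e ∈ G.edgesWithin U) :
    ¬ e.IsDiag :=
  G.not_isDiag_of_mem_edgeSet (mem_edgeFinset.1 (mem_filter.1 he).1)

lemma card_edgesWithin_le (U : Finset V) : #(G.edgesWithin U) ≤ (#U).choose 2 := by
  rw [← Sym2.card_image_offDiag]
  refine card_le_card fun e he => ?_
  have hd := not_isDiag_of_mem_edgesWithin he
  have hU := (mem_filter.1 he).2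
  induction e using Sym2.ind with
  | _ a b =>
    exact mem_image.2 ⟨(a, b),
      mem_offDiag.2 ⟨hU a (by simp), hU b (by simp), by simpa using hd⟩, rfl⟩

end SimpleGraph

open SimpleGraph

section Constraints

variable {V : Type*} [Fintype V] [DecidableEq V] {G : SimpleGraph V} [DecidableRel G.Adj]
  {g : Sym2 V → ℝ}

lemma EdmondsConstraints.fractionalMatchingConstraints (hg : EdmondsConstraints G g) :
    FractionalMatchingConstraints G g :=
  ⟨hg.1, hg.2.1⟩

namespace FractionalMatchingConstraints

lemma apply_le_one (hg : FractionalMatchingConstraints G g) {e : Sym2 V}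
    (he : e ∈ G.edgeFinset) : g e ≤ 1 := by
  induction e using Sym2.ind with
  | _ a b =>
    have hinc : s(a, b) ∈ G.incidenceFinset a :=
      (G.mem_incidenceFinset _ _).2 ⟨mem_edgeFinset.1 he, Sym2.mem_mk_left a b⟩
    refine le_trans (single_le_sum (fun e he' => hg.1 e ?_) hinc) (hg.2 a)
    exact G.incidenceFinset_subset a he'

lemma two_mul_sum_edgesWithin_le (hg : FractionalMatchingConstraints G g) (U : Finset V) :
    2 * ∑ e ∈ G.edgesWithin U, g e ≤ #U := by
  have h_swap : ∑ v ∈ U, ∑ e ∈ (G.edgesWithin U).filter (v ∈ ·), g e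
      = ∑ e ∈ G.edgesWithin U, ∑ v ∈ U.filter (· ∈ e), g e :=
    sum_comm' fun v e => by simp only [mem_filter]; tauto
  have h_incident (v : V) : ∑ e ∈ (G.edgesWithin U).filter (v ∈ ·), g e ≤ 1 := by
    have h_deg := hg.2 v
    rw [incidenceFinset_eq_filter] at h_deg
    refine le_trans (sum_le_sum_of_subset_of_nonneg ?_ fun e he _ => ?_) h_deg
    · exact filter_subset_filter _ (filter_subset _ _)
    · exact hg.1 e (filter_subset _ _ he)
  calc 2 * ∑ e ∈ G.edgesWithin U, g e
      = ∑ e ∈ G.edgesWithin U, ∑ v ∈ U.filter (· ∈ e), g e := by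
        rw [mul_sum]
        refine sum_congr rfl fun e he => ?_
        rw [sum_const, filter_mem_eq_toFinset he,
          Sym2.card_toFinset_of_not_isDiag e (not_isDiag_of_mem_edgesWithin he), two_nsmul,
          two_mul]
    _ = ∑ v ∈ U, ∑ e ∈ (G.edgesWithin U).filter (v ∈ ·), g e := h_swap.symm
    _ ≤ ∑ _v ∈ U, (1 : ℝ) := sum_le_sum fun v _ => h_incident v
    _ = #U := by simp

lemma edmondsConstraints_div_one_add (hg : FractionalMatchingConstraints G g) {a : ℝ}
    (ha : 0 ≤ a) (hga : ∀ e ∈ G.edgeFinset, g e ≤ a) :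
    EdmondsConstraints G (fun e => g e / (1 + a)) := by
  have h_one : (1 : ℝ) ≤ 1 + a := by linarith
  have h_shrink : ∀ e ∈ G.edgeFinset, g e / (1 + a) ≤ g e := fun e he =>
    div_le_self (hg.1 e he) h_one
  refine ⟨fun e he => div_nonneg (hg.1 e he) (by linarith), fun v => ?_, fun U hU => ?_⟩
  · exact le_trans (sum_le_sum fun e he => h_shrink e (G.incidenceFinset_subset v he)) (hg.2 v)
  · obtain ⟨k, hk⟩ := hU
    have h_half : #U / 2 = k := by omega
    have h_count : ∑ e ∈ G.edgesWithin U, g e ≤ k * (2 * k + 1) * a := by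
      have h_card : (#(G.edgesWithin U) : ℝ) ≤ k * (2 * k + 1) := by
        have := card_edgesWithin_le (G := G) U
        rw [hk, Nat.choose_two_right, Nat.add_sub_cancel, Nat.mul_comm,
          Nat.mul_assoc, Nat.mul_div_cancel_left _ two_pos] at this
        exact_mod_cast this
      calc ∑ e ∈ G.edgesWithin U, g e ≤ ∑ _e ∈ G.edgesWithin U, a :=
            sum_le_sum fun e he => hga e (filter_subset _ _ he)
        _ = #(G.edgesWithin U) * a := by rw [sum_const, nsmul_eq_mul]
        _ ≤ k * (2 * k + 1) * a := mul_le_mul_of_nonneg_right h_card ha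
    have h_sum := two_mul_sum_edgesWithin_le hg U
    rw [hk] at h_sum
    push_cast at h_sum
    rw [h_half, ← sum_div, div_le_iff₀ (by linarith)]
    exact le_mul_one_add_of_two_mul_le k.cast_nonneg h_sum h_count

end FractionalMatchingConstraints

end Constraints

section Scaling

variable {V : Type*} [Fintype V] [DecidableEq V] {G : SimpleGraph V} [DecidableRel G.Adj]
  {f : Sym2 V → ℝ}

lemma fractionalMatchingConstraints_inv_sum_mul (h₀ : ∀ e ∈ G.edgeFinset, 0 ≤ f e) :
    FractionalMatchingConstraints G (fun e => (∑ e ∈ G.edgeFinset, f e)⁻¹ * f e) := by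
  have h_inv : 0 ≤ (∑ e ∈ G.edgeFinset, f e)⁻¹ := inv_nonneg.2 (sum_nonneg h₀)
  refine ⟨fun e he => mul_nonneg h_inv (h₀ e he), fun v => ?_⟩
  rw [← mul_sum]
  exact inv_mul_le_one_of_le₀
    (sum_le_sum_of_subset_of_nonneg (G.incidenceFinset_subset v) fun e he _ => h₀ e he)
    (sum_nonneg h₀)

variable (G f)

lemma isClosed_setOf_fractionalMatchingConstraints_mul :
    IsClosed {t : ℝ | 0 ≤ t ∧ FractionalMatchingConstraints G (fun e => t * f e)} := by
  have h_eq : {t : ℝ | 0 ≤ t ∧ FractionalMatchingConstraints G (fun e => t * f e)}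
      = {t | 0 ≤ t} ∩ (⋂ e ∈ G.edgeFinset, {t | 0 ≤ t * f e})
        ∩ ⋂ v, {t | ∑ e ∈ G.incidenceFinset v, t * f e ≤ 1} := by
    ext t
    simp [FractionalMatchingConstraints, and_assoc]
  rw [h_eq]
  exact ((isClosed_le continuous_const continuous_id).inter
    (isClosed_biInter fun e _ => isClosed_le continuous_const (by fun_prop))).inter
    (isClosed_iInter fun v => isClosed_le (by fun_prop) continuous_const)

variable {G f}

lemma bddAbove_setOf_fractionalMatchingConstraints_mul {e₀ : Sym2 V} (he₀ : e₀ ∈ G.edgeFinset)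
    (hf₀ : 0 < f e₀) :
    BddAbove {t : ℝ | 0 ≤ t ∧ FractionalMatchingConstraints G (fun e => t * f e)} :=
  ⟨1 / f e₀, fun _ ht => (le_div_iff₀ hf₀).2 (ht.2.apply_le_one he₀)⟩

end Scaling

/-- For nonnegative, not identically zero edge weights `f`, the flow extension
ratio `λ(f)` and approximate flow extension ratio `μ(f)` satisfy
`1/μ(f) ≥ 1/λ(f) − max_{e ∈ E} f(e)`. -/
theorem flow_extension_ratio_reciprocal_bound
    {V : Type*} [Fintype V] [DecidableEq V]
    (G : SimpleGraph V) [DecidableRel G.Adj] (f : Sym2 V → ℝ)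
    (h₀ : ∀ e ∈ G.edgeFinset, 0 ≤ f e)
    (hne : ∃ e ∈ G.edgeFinset, f e ≠ 0) :
    1 / sSup {t : ℝ | 0 ≤ t ∧ FractionalMatchingConstraints G (fun e => t * f e)}
      ≥ 1 / sSup {t : ℝ | 0 ≤ t ∧ EdmondsConstraints G (fun e => t * f e)}
        - G.edgeFinset.sup' (hne.imp fun _ he => he.1) f := by
  obtain ⟨e₀, he₀, hfe₀⟩ := id hne
  have hf₀ : 0 < f e₀ := (h₀ e₀ he₀).lt_of_ne' hfe₀
  set M := G.edgeFinset.sup' (hne.imp fun _ he => he.1) f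
  have hfM : ∀ e ∈ G.edgeFinset, f e ≤ M := fun e he => le_sup' f he
  have hM : 0 ≤ M := (h₀ e₀ he₀).trans (hfM e₀ he₀)
  have h_bdd := bddAbove_setOf_fractionalMatchingConstraints_mul he₀ hf₀
  set μ := sSup {t : ℝ | 0 ≤ t ∧ FractionalMatchingConstraints G (fun e => t * f e)}
  set lam := sSup {t : ℝ | 0 ≤ t ∧ EdmondsConstraints G (fun e => t * f e)}
  have hμ_mem : 0 ≤ μ ∧ FractionalMatchingConstraints G (fun e => μ * f e) :=
    (isClosed_setOf_fractionalMatchingConstraints_mul G f).csSup_mem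
      ⟨0, le_rfl, by simp [FractionalMatchingConstraints]⟩ h_bdd
  have h_sum : 0 < ∑ e ∈ G.edgeFinset, f e := sum_pos' h₀ ⟨e₀, he₀, hf₀⟩
  have hμ_pos : 0 < μ := (inv_pos.2 h_sum).trans_le
    (le_csSup h_bdd ⟨(inv_pos.2 h_sum).le, fractionalMatchingConstraints_inv_sum_mul h₀⟩)
  have h_lam : μ / (1 + μ * M) ≤ lam := by
    refine le_csSup (h_bdd.mono fun _ ht => ?_) ⟨by positivity, ?_⟩
    · exact ⟨ht.1, ht.2.fractionalMatchingConstraints⟩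
    · simpa only [div_mul_eq_mul_div] using hμ_mem.2.edmondsConstraints_div_one_add
        (mul_nonneg hμ_pos.le hM) fun e he => mul_le_mul_of_nonneg_left (hfM e he) hμ_pos.le
  calc 1 / μ = 1 / (μ / (1 + μ * M)) - M := by field_simp; ring
    _ ≥ 1 / lam - M := by gcongr
end

section
/- Let S be a nonempty finite set, let c ≥ 0 be a real number, and let λ, μ : S → ℝ be functions such that for every s ∈ S: λ(s) > 0, μ(s) > 0, λ(s) ≤ μ(s), and 1/μ(s) ≥ 1/λ(s) − c. Let s̃ ∈ S be a maximizer of μ over S and let s* ∈ S be a maximizer of λ over S. Then λ(s̃)/λ(s*) ≥ 1/(1 + c·λ(s*)). -/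
/-- Under the pointwise bounds `λ(s) ≤ μ(s)` and `1/μ(s) ≥ 1/λ(s) − c` with
`λ, μ > 0` on a nonempty finite set, a maximizer `s̃` of `μ` approximates a maximizer `s*`
of `λ` with ratio at least `1/(1 + c·λ(s*))`. -/
theorem approx_maximizer_lower_bound
    {S : Type*} [Fintype S] [Nonempty S]
    (c : ℝ) (hc : 0 ≤ c)
    (lam mu : S → ℝ)
    (hlam : ∀ s : S, 0 < lam s)
    (hmu : ∀ s : S, 0 < mu s)
    (h₁ : ∀ s : S, lam s ≤ mu s)
    (h₂ : ∀ s : S, 1 / mu s ≥ 1 / lam s - c)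
    (stilde sstar : S)
    (hstilde : ∀ s : S, mu s ≤ mu stilde)
    (hsstar : ∀ s : S, lam s ≤ lam sstar) :
    lam stilde / lam sstar ≥ 1 / (1 + c * lam sstar) := by
  have hL := hlam sstar
  have hLt := hlam stilde
  have hmt := hmu stilde
  have hms := hmu sstar
  have h1 : 1 / mu stilde ≤ 1 / lam sstar := by
    have h1a : 1 / mu stilde ≤ 1 / mu sstar := one_div_le_one_div_of_le hms (hstilde sstar)
    exact h1a.trans (one_div_le_one_div_of_le hL (h₁ sstar))
  have h2 : 1 / lam stilde - c ≤ 1 / lam sstar := le_trans (h₂ stilde) h1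
  have hpos : 0 < 1 + c * lam sstar := by positivity
  rw [ge_iff_le, div_le_div_iff₀ hpos hL]
  have e1 : (1 / lam stilde) * lam stilde = 1 := by field_simp
  have e2 : (1 / lam sstar) * lam sstar = 1 := by field_simp
  nlinarith [mul_le_mul_of_nonneg_right h2 (mul_pos hLt hL).le]
end

section
/- Let m, K, J be natural numbers, let w : {0, 1, …, m−1} → ℝ be nonnegative weights, and let T ∈ ℝ. Suppose a : {0, 1, …, K} → ℕ is a monotonically nondecreasing sequence with a(0) = 0, a(K) = m, and for every j < K the sum of w(i) over indices i with a(j) ≤ i < a(j+1) is at most T. Suppose b : {0, 1, …, J} → ℕ is a strictly increasing 'greedy maximal' sequence: b(0) = 0, b(J) = m, for every j < J the sum of w(i) over b(j) ≤ i < b(j+1) is at most T, and for every j < J either b(j+1) = m or the sum of w(i) over b(j) ≤ i ≤ b(j+1) exceeds T. Then J ≤ K. -/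
open Finset

/-- Greedy optimality for partitioning a linear sequence of nonnegative weights
into contiguous blocks of total weight at most `T`. If some nondecreasing cut sequence `a`
with `K` blocks is feasible, then the greedy maximal-block cut sequence `b` uses `J ≤ K`
blocks. -/
theorem greedy_partition_minimal
    (m K J : ℕ) (w : ℕ → ℝ) (T : ℝ)
    (hw : ∀ i < m, 0 ≤ w i)
    (a : ℕ → ℕ)
    (ha_mono : ∀ j < K, a j ≤ a (j + 1))
    (ha0 : a 0 = 0) (haK : a K = m)
    (ha_feas : ∀ j < K, ∑ i ∈ Finset.Ico (a j) (a (j + 1)), w i ≤ T)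
    (b : ℕ → ℕ)
    (hb_mono : ∀ j < J, b j < b (j + 1))
    (hb0 : b 0 = 0) (hbJ : b J = m)
    (hb_feas : ∀ j < J, ∑ i ∈ Finset.Ico (b j) (b (j + 1)), w i ≤ T)
    (hb_max : ∀ j < J, b (j + 1) = m ∨ T < ∑ i ∈ Finset.Icc (b j) (b (j + 1)), w i) :
    J ≤ K := by
  -- a is monotone up to K
  have amono : ∀ j k, j ≤ k → k ≤ K → a j ≤ a k := by
    intro j k hjk hk
    induction k with
    | zero => rw [Nat.le_zero.mp hjk]
    | succ n ih =>
      rcases Nat.eq_or_lt_of_le hjk with h | h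
      · exact h ▸ le_rfl
      · exact le_trans (ih (by omega) (by omega)) (ha_mono n (by omega))
  -- b is monotone up to J
  have bmono : ∀ j k, j ≤ k → k ≤ J → b j ≤ b k := by
    intro j k hjk hk
    induction k with
    | zero => rw [Nat.le_zero.mp hjk]
    | succ n ih =>
      rcases Nat.eq_or_lt_of_le hjk with h | h
      · exact h ▸ le_rfl
      · exact le_trans (ih (by omega) (by omega)) (le_of_lt (hb_mono n (by omega)))
  -- key induction: a j ≤ b j
  have key : ∀ j, j ≤ K → j ≤ J → a j ≤ b j := by
    intro j
    induction j with
    | zero => simp [ha0, hb0]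
    | succ n ih =>
      intro hnK hnJ
      have hab : a n ≤ b n := ih (by omega) (by omega)
      rcases hb_max n (by omega) with h | h
      · have : a (n + 1) ≤ m := haK ▸ amono (n + 1) K hnK le_rfl
        omega
      · by_contra hc
        push_neg at hc
        have hsub : Finset.Ico (b n) (b (n + 1) + 1) ⊆ Finset.Ico (a n) (a (n + 1)) := by
          intro i hi
          simp only [Finset.mem_Ico] at *
          omega
        have ham : a (n + 1) ≤ m := haK ▸ amono (n + 1) K hnK le_rfl
        have hle : ∑ i ∈ Finset.Ico (b n) (b (n + 1) + 1), w i
            ≤ ∑ i ∈ Finset.Ico (a n) (a (n + 1)), w i := by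
          apply Finset.sum_le_sum_of_subset_of_nonneg hsub
          intro i hi _
          simp only [Finset.mem_Ico] at hi
          exact hw i (by omega)
        rw [← Finset.Ico_add_one_right_eq_Icc] at h
        have := ha_feas n (by omega)
        linarith
  by_contra hKJ
  push_neg at hKJ
  have h1 : a K ≤ b K := key K le_rfl (by omega)
  have h2 : b K < b J := lt_of_lt_of_le (hb_mono K hKJ) (bmono (K + 1) J (by omega) le_rfl)
  omega
end

section
/- Let m, K, J be natural numbers, let w : {0, 1, …, m−1} → ℝ be nonnegative weights, and let T ∈ ℝ. Suppose a : {0, 1, …, K} → ℕ is a monotonically nondecreasing sequence with a(0) = 0, a(K) = m, and for every j < K the sum of w(i) over indices i with a(j) ≤ i < a(j+1) is at most T. Suppose b : {0, 1, …, J} → ℕ is a strictly increasing sequence with b(0) = 0, b(J) = m, such that for every j < J the sum of w(i) over b(j) ≤ i < b(j+1) is at most T and either b(j+1) = m or the sum of w(i) over b(j) ≤ i ≤ b(j+1) exceeds T. Then for every index j ≤ min(J, K), it holds that b(j) ≥ a(j). -/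
open Finset

/-- Dominance invariant for the greedy partition. The cut positions of the
greedy maximal-block partition `b` are always at least as far along the sequence as the cut
positions of any feasible partition `a` into blocks of weight at most `T`:
`b j ≥ a j` for every `j ≤ min J K`. -/
theorem greedy_partition_dominance
    (m K J : ℕ) (w : ℕ → ℝ) (T : ℝ)
    (hw : ∀ i < m, 0 ≤ w i)
    (a : ℕ → ℕ)
    (ha_mono : ∀ j < K, a j ≤ a (j + 1))
    (ha0 : a 0 = 0) (haK : a K = m)
    (ha_feas : ∀ j < K, ∑ i ∈ Finset.Ico (a j) (a (j + 1)), w i ≤ T)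
    (b : ℕ → ℕ)
    (hb_mono : ∀ j < J, b j < b (j + 1))
    (hb0 : b 0 = 0) (hbJ : b J = m)
    (hb_feas : ∀ j < J, ∑ i ∈ Finset.Ico (b j) (b (j + 1)), w i ≤ T)
    (hb_max : ∀ j < J, b (j + 1) = m ∨ T < ∑ i ∈ Finset.Icc (b j) (b (j + 1)), w i) :
    ∀ j ≤ min J K, a j ≤ b j := by
  have hmono : ∀ j k, j ≤ k → k ≤ K → a j ≤ a k := by
    intro j k hjk hkK
    induction k with
    | zero => rw [Nat.le_zero.mp hjk]
    | succ k ih =>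
      rcases Nat.eq_or_lt_of_le hjk with h | h
      · exact le_of_eq (congrArg a h)
      · exact le_trans (ih (by omega) (by omega)) (ha_mono k (by omega))
  intro j hj
  induction j with
  | zero => simp [ha0, hb0]
  | succ j ih =>
    have hjJ : j + 1 ≤ J := le_trans hj (min_le_left _ _)
    have hjK : j + 1 ≤ K := le_trans hj (min_le_right _ _)
    have hbj : a j ≤ b j := ih (by omega)
    by_contra h
    push_neg at h
    have ham : a (j + 1) ≤ m := haK ▸ hmono (j + 1) K hjK le_rfl
    have hbm : b (j + 1) < m := lt_of_lt_of_le h ham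
    rcases hb_max j (by omega) with h1 | h2
    · omega
    · have hsub : Finset.Icc (b j) (b (j + 1)) ⊆ Finset.Ico (a j) (a (j + 1)) := by
        intro i hi
        simp only [Finset.mem_Icc] at hi
        simp only [Finset.mem_Ico]
        omega
      have hsum : ∑ i ∈ Finset.Icc (b j) (b (j + 1)), w i
          ≤ ∑ i ∈ Finset.Ico (a j) (a (j + 1)), w i := by
        apply Finset.sum_le_sum_of_subset_of_nonneg hsub
        intro i hi _
        simp only [Finset.mem_Ico] at hi
        exact hw i (by omega)
      have := ha_feas j (by omega)
      linarith
end

section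
/- Let K be a positive even integer and let θ be a real number with 0 ≤ θ < 2π. Let θ' = θ + π if θ < π, and θ' = θ − π otherwise (so θ' is (θ + π) reduced modulo 2π into [0, 2π)). Then ⌊K·θ'/(2π)⌋ = (⌊K·θ/(2π)⌋ + K/2) mod K. -/
/-!
Write `K = 2m` and `x = Kθ/(2π)`, the sector coordinate of `θ`, so that `x ∈ [0, 2m)` and
turning by `π` shifts `x` by `m`. The antipodal direction has coordinate `x + m` when `x < m` and
`x - m` otherwise; in both cases its floor is the representative of `⌊x⌋ + m` in `[0, 2m)`.
-/

namespace Int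

lemma add_emod_two_mul_of_lt {a m : ℤ} (ha₀ : 0 ≤ a) (ha : a < m) :
    (a + m) % (2 * m) = a + m :=
  emod_eq_of_lt (by omega) (by omega)

lemma add_emod_two_mul_of_le {a m : ℤ} (ha : m ≤ a) (ha₁ : a < 2 * m) :
    (a + m) % (2 * m) = a - m := by
  rw [show a + m = a - m + 2 * m * 1 by ring, add_mul_emod_self_left,
    emod_eq_of_lt (by omega) (by omega)]

lemma floor_ite_add_sub_eq_emod {x : ℝ} {m : ℤ} (hx₀ : 0 ≤ x) (hx₁ : x < 2 * m) :
    ⌊if x < m then x + m else x - m⌋ = (⌊x⌋ + m) % (2 * m) := by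
  split_ifs with h
  · rw [floor_add_intCast, add_emod_two_mul_of_lt (floor_nonneg.2 hx₀) (floor_lt.2 h)]
  · rw [floor_sub_intCast,
      add_emod_two_mul_of_le (le_floor.2 (not_lt.1 h)) (floor_lt.2 (by exact_mod_cast hx₁))]

end Int

lemma sector_coord_add_pi (K θ : ℝ) :
    K * (θ + Real.pi) / (2 * Real.pi) = K * θ / (2 * Real.pi) + K / 2 := by
  field_simp [Real.pi_ne_zero]

lemma sector_coord_sub_pi (K θ : ℝ) :
    K * (θ - Real.pi) / (2 * Real.pi) = K * θ / (2 * Real.pi) - K / 2 := by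
  field_simp [Real.pi_ne_zero]

lemma sector_coord_lt_half_iff {K θ : ℝ} (hK : 0 < K) :
    K * θ / (2 * Real.pi) < K / 2 ↔ θ < Real.pi := by
  rw [div_lt_iff₀ Real.two_pi_pos, show K / 2 * (2 * Real.pi) = K * Real.pi by ring,
    mul_lt_mul_iff_right₀ hK]

lemma sector_coord_lt {K θ : ℝ} (hK : 0 < K) (hθ : θ < 2 * Real.pi) :
    K * θ / (2 * Real.pi) < K := by
  rwa [div_lt_iff₀ Real.two_pi_pos, mul_lt_mul_iff_right₀ hK]

/-- For a node with `K` equal sectors (with `K` a positive even integer), the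
sector index of the antipodal direction `θ' = (θ + π) mod 2π` of a direction `θ ∈ [0, 2π)` is
`(⌊K·θ/(2π)⌋ + K/2) mod K`. -/
theorem antipodal_sector_index
    (K : ℕ) (hK : 0 < K) (hKeven : Even K)
    (θ : ℝ) (hθ₀ : 0 ≤ θ) (hθ₁ : θ < 2 * Real.pi) :
    ⌊(K : ℝ) * (if θ < Real.pi then θ + Real.pi else θ - Real.pi) / (2 * Real.pi)⌋
      = (⌊(K : ℝ) * θ / (2 * Real.pi)⌋ + ((K / 2 : ℕ) : ℤ)) % (K : ℤ) := by
  obtain ⟨m, rfl⟩ := hKeven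
  have hK_real : (0 : ℝ) < (m + m : ℕ) := by exact_mod_cast hK
  have half_eq_m : ((m + m : ℕ) : ℝ) / 2 = ((m : ℤ) : ℝ) := by push_cast; ring
  rw [apply_ite (fun t => _ * t / _), sector_coord_add_pi, sector_coord_sub_pi]
  simp only [← sector_coord_lt_half_iff hK_real, half_eq_m]
  rw [show (m + m) / 2 = m by omega, show ((m + m : ℕ) : ℤ) = 2 * (m : ℤ) by push_cast; ring]
  refine Int.floor_ite_add_sub_eq_emod (by positivity) ?_
  rw [← half_eq_m, mul_div_cancel₀ _ two_ne_zero]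
  exact sector_coord_lt hK_real hθ₁
end

section
/- Let K be a positive even natural number, let V be a type, and let H be a simple graph on the product type V × (ZMod K) such that whenever (u, j) and (w, j') are adjacent in H, it holds that j' = j + K/2 in ZMod K. If (u, j) and (w, j') lie in the same connected component of H, then j' = j or j' = j + K/2 in ZMod K. -/
/-- Under an even homogeneous sectorization, the auxiliary graph splits into
`K/2` isolated pieces: if every edge of `H` on `V × ZMod K` joins a sector-vertex of index `j`
to one of index `j + K/2`, then any two sector-vertices in the same connected component have
indices differing by `0` or `K/2` in `ZMod K`. -/
theorem even_homogeneous_sectorization_components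
    (K : ℕ) (hK : 0 < K) (hKeven : Even K)
    {V : Type*} (H : SimpleGraph (V × ZMod K))
    (hadj : ∀ (u w : V) (j j' : ZMod K),
      H.Adj (u, j) (w, j') → j' = j + ((K / 2 : ℕ) : ZMod K)) :
    ∀ (u w : V) (j j' : ZMod K),
      H.Reachable (u, j) (w, j') → j' = j ∨ j' = j + ((K / 2 : ℕ) : ZMod K) := by
  have hcc : ((K / 2 : ℕ) : ZMod K) + ((K / 2 : ℕ) : ZMod K) = 0 := by
    obtain ⟨m, hm⟩ := hKeven
    have : K / 2 = m := by omega
    rw [this, ← Nat.cast_add]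
    have : m + m = K := by omega
    rw [this, ZMod.natCast_self]
  have key : ∀ a b : V × ZMod K, H.Walk a b →
      b.2 = a.2 ∨ b.2 = a.2 + ((K / 2 : ℕ) : ZMod K) := by
    intro a b p
    induction p with
    | nil => left; rfl
    | @cons x y z h p ih =>
      have hx : y.2 = x.2 + ((K / 2 : ℕ) : ZMod K) := hadj x.1 y.1 x.2 y.2 (by simpa using h)
      rcases ih with h1 | h1
      · right; rw [h1, hx]
      · left; rw [h1, hx, add_assoc, hcc, add_zero]
  intro u w j j' hr
  exact key (u, j) (w, j') hr.some
end
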